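/- Let $R$ be a Noetherian local ring which is equidimensional of dimension $d$ (i.e., $\dim R/\mathfrak{p} = d$ for every minimal prime $\mathfrak{p}$ of $R$), and let $M$ be a nonzero finitely generated $R$-module with $\operatorname{depth}_{\mathfrak{m}_R} M \ge d$. Then every associated prime of $M$ is a minimal prime of $R$. In particular, the support of $M$ is a union of irreducible components of $\operatorname{Spec} R$. -/

import Mathlib

open Pointwise IsLocalRing

universe u v

variable {R : Type u} [CommRing R]

lemma step_assoc [IsNoetherianRing R] [IsLocalRing R]
    (M : Type u) [AddCommGroup M] [Module R M] [Module.Finite R M]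
    {r : R} (hrm : r ∈ maximalIdeal R) (hr : IsSMulRegular M r)
    {p : Ideal R} (hp : p ∈ associatedPrimes R M) :
    ∃ q ∈ associatedPrimes R (QuotSMulTop r M), p < q := by
  obtain ⟨hprime, x, hx⟩ := isAssociatedPrime_iff.mp hp
  have hxne : x ≠ 0 := by
    rintro rfl
    exact hprime.ne_top (by
      rw [hx, eq_top_iff]; intro a _; rw [Submodule.mem_colon_singleton, smul_zero]
      exact Submodule.zero_mem _)
  -- r ∉ p
  have hrp : r ∉ p := by
    intro h
    rw [hx, Submodule.mem_colon_singleton, Submodule.mem_bot] at h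
    exact hxne (hr (by simpa using h))
  -- pick a representative not in r • ⊤
  have hne : (Ideal.span {r} : Ideal R) ≠ ⊤ := by
    intro h
    have h1 : Ideal.span {r} ≤ maximalIdeal R :=
      (Ideal.span_singleton_le_iff_mem _).mpr hrm
    exact (maximalIdeal.isMaximal R).ne_top (top_le_iff.mp (h ▸ h1))
  have hbot := Ideal.iInf_pow_smul_eq_bot_of_isLocalRing (R := R) (M := M) (Ideal.span {r}) hne
  have hmem : ∀ k : ℕ, ((Ideal.span {r} : Ideal R) ^ k • ⊤ : Submodule R M) = r ^ k • ⊤ := by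
    intro k
    rw [Ideal.span_singleton_pow, Submodule.ideal_span_singleton_smul]
  have hex : ∃ k : ℕ, x ∉ ((Ideal.span {r} : Ideal R) ^ k • ⊤ : Submodule R M) := by
    by_contra h
    push_neg at h
    have hm : x ∈ (⨅ k : ℕ, (Ideal.span {r} : Ideal R) ^ k • ⊤ : Submodule R M) :=
      (Submodule.mem_iInf _).mpr h
    rw [hbot] at hm
    exact hxne (by simpa using hm)
  classical
  let k0 := Nat.find hex
  have hk0 : x ∉ ((Ideal.span {r} : Ideal R) ^ k0 • ⊤ : Submodule R M) := Nat.find_spec hex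
  have hk0ne : k0 ≠ 0 := by
    intro h
    apply hk0
    rw [h, pow_zero, Ideal.one_eq_top, Submodule.top_smul]
    trivial
  have hk1 : x ∈ ((Ideal.span {r} : Ideal R) ^ (k0 - 1) • ⊤ : Submodule R M) := by
    by_contra h
    exact absurd (Nat.find_min hex (Nat.sub_lt (Nat.pos_of_ne_zero hk0ne) one_pos)) (by exact fun h2 => h2 h)
  rw [hmem] at hk1
  obtain ⟨y, -, hy⟩ : ∃ y ∈ (⊤ : Submodule R M), r ^ (k0 - 1) • y = x := by
    have := hk1
    rw [← SetLike.mem_coe, Submodule.coe_pointwise_smul] at this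
    obtain ⟨y, hy, hy2⟩ := this
    exact ⟨y, hy, hy2⟩
  -- y has the same annihilator as x
  have hanny : ∀ a : R, a • y = 0 ↔ a • x = 0 := by
    intro a
    constructor
    · intro h; rw [← hy, smul_comm, h, smul_zero]
    · intro h
      rw [← hy, smul_comm] at h
      exact (hr.pow (k0 - 1)) (by simpa using h)
  -- y is not in r • ⊤
  have hynot : y ∉ (r • ⊤ : Submodule R M) := by
    intro h
    apply hk0
    rw [hmem]
    have : x ∈ (r ^ (k0 - 1) • (r • ⊤) : Submodule R M) :=
      ⟨y, h, hy⟩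
    rw [smul_smul, ← pow_succ] at this
    rwa [Nat.sub_add_cancel (Nat.pos_of_ne_zero hk0ne)] at this
  -- pass to the quotient
  set Q := QuotSMulTop r M
  set ybar : Q := Submodule.Quotient.mk y with hybar
  have hybarne : ybar ≠ 0 := by
    intro h
    exact hynot ((Submodule.Quotient.mk_eq_zero _).mp h)
  obtain ⟨q, hq, hle⟩ := exists_le_isAssociatedPrime_of_isNoetherianRing R ybar hybarne
  refine ⟨q, hq, lt_of_le_of_ne ?_ ?_⟩
  · intro a ha
    apply hle
    rw [Submodule.mem_colon_singleton, Submodule.mem_bot]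
    have : a • y = 0 := by
      rw [hanny]
      rw [hx, Submodule.mem_colon_singleton, Submodule.mem_bot] at ha
      exact ha
    rw [hybar, ← Submodule.Quotient.mk_smul, this, Submodule.Quotient.mk_zero]
  · intro h
    apply hrp
    rw [h]
    apply hle
    rw [Submodule.mem_colon_singleton, Submodule.mem_bot, hybar, ← Submodule.Quotient.mk_smul,
      Submodule.Quotient.mk_eq_zero]
    exact Submodule.smul_mem_pointwise_smul y r ⊤ trivial

lemma aux_chain [IsNoetherianRing R] [IsLocalRing R] :
    ∀ (n : ℕ) (M : Type u) [AddCommGroup M] [Module R M] [Module.Finite R M]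
      (rs : List R), rs.length = n → (∀ r ∈ rs, r ∈ maximalIdeal R) →
      RingTheory.Sequence.IsRegular M rs →
      ∀ p ∈ associatedPrimes R M, ∃ c : LTSeries (PrimeSpectrum R),
        c.length = n ∧ c.head.asIdeal = p := by
  intro n
  induction n with
  | zero =>
    intro M _ _ _ rs _ _ _ p hp
    exact ⟨RelSeries.singleton _ ⟨p, hp.isPrime⟩, rfl, rfl⟩
  | succ n ih =>
    intro M _ _ _ rs hlen hmem hreg p hp
    match rs, hlen with
    | r :: rs', hlen =>
    rw [RingTheory.Sequence.isRegular_cons_iff] at hreg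
    obtain ⟨hr, hreg'⟩ := hreg
    obtain ⟨q, hq, hpq⟩ := step_assoc M (hmem r (by simp)) hr hp
    obtain ⟨c, hclen, hchead⟩ := ih (QuotSMulTop r M) rs' (by simpa using hlen)
      (fun s hs => hmem s (by simp [hs])) hreg' q hq
    have hlt : (⟨p, hp.isPrime⟩ : PrimeSpectrum R) < c.head := by
      have : (⟨p, hp.isPrime⟩ : PrimeSpectrum R).asIdeal < c.head.asIdeal := by
        rw [hchead]; exact hpq
      exact this
    exact ⟨c.cons ⟨p, hp.isPrime⟩ hlt, by simp [hclen], by simp⟩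

lemma dim_ge_of_chain (c : LTSeries (PrimeSpectrum R)) :
    (c.length : WithBot (WithTop ℕ)) ≤ ringKrullDim (R ⧸ c.head.asIdeal) := by
  set p := c.head.asIdeal with hp
  have hle : ∀ i, p ≤ (c i).asIdeal := fun i => c.monotone (Fin.zero_le i)
  have hprime : ∀ i, ((c i).asIdeal.map (Ideal.Quotient.mk p)).IsPrime := fun i =>
    Ideal.map_isPrime_of_surjective Ideal.Quotient.mk_surjective
      (by rw [Ideal.mk_ker]; exact hle i)
  have hsm : StrictMono (fun i => (⟨(c i).asIdeal.map (Ideal.Quotient.mk p), hprime i⟩ :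
      PrimeSpectrum (R ⧸ p))) := by
    intro i j hij
    have hlt : (c i).asIdeal < (c j).asIdeal := c.strictMono hij
    show ((c i).asIdeal.map (Ideal.Quotient.mk p) : Ideal (R ⧸ p)) <
      (c j).asIdeal.map (Ideal.Quotient.mk p)
    refine lt_of_le_of_ne (Ideal.map_mono hlt.le) ?_
    intro heq
    have h1 := congrArg (Ideal.comap (Ideal.Quotient.mk p)) heq
    rw [Ideal.comap_map_of_surjective _ Ideal.Quotient.mk_surjective,
      Ideal.comap_map_of_surjective _ Ideal.Quotient.mk_surjective,
      ← RingHom.ker_eq_comap_bot, Ideal.mk_ker, sup_eq_left.mpr (hle i), sup_eq_left.mpr (hle j)] at h1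
    exact hlt.ne h1
  let d : LTSeries (PrimeSpectrum (R ⧸ p)) :=
    ⟨c.length, fun i => ⟨(c i).asIdeal.map (Ideal.Quotient.mk p), hprime i⟩,
      fun i => hsm (by simp [Fin.castSucc_lt_succ_iff])⟩
  exact Order.LTSeries.length_le_krullDim d

lemma exists_assoc_le [IsNoetherianRing R]
    (M : Type v) [AddCommGroup M] [Module R M] [Module.Finite R M]
    (P : Ideal R) [P.IsPrime] (hP : Module.annihilator R M ≤ P) :
    ∃ q ∈ associatedPrimes R M, q ≤ P := by
  classical
  set N := Submodule.torsion' R M P.primeCompl with hNdef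
  have hNne : N ≠ ⊤ := by
    intro h
    have hall : ∀ m : M, ∃ s : P.primeCompl, (s : R) • m = 0 := by
      intro m
      have hm : m ∈ N := h ▸ Submodule.mem_top
      exact (Submodule.mem_torsion'_iff (R := R) (M := M) P.primeCompl m).mp hm
    choose f hf using hall
    obtain ⟨t, ht⟩ := Module.Finite.fg_top (R := R) (M := M)
    set s : P.primeCompl := ∏ m ∈ t, f m with hs
    have hcoe : (s : R) = ∏ m ∈ t, (f m : R) := by
      simp [hs]
    have hskill : ∀ m : M, (s : R) • m = 0 := by
      intro m
      have hm : m ∈ Submodule.span R (t : Set M) := ht ▸ Submodule.mem_top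
      induction hm using Submodule.span_induction with
      | mem g hg =>
        have hprod : (∏ m ∈ t.erase g, (f m : R)) * (f g : R) = ∏ m ∈ t, (f m : R) :=
          Finset.prod_erase_mul t _ hg
        rw [hcoe, ← hprod, mul_smul, hf g, smul_zero]
      | zero => rw [smul_zero]
      | add u v _ _ hu hv => rw [smul_add, hu, hv, add_zero]
      | smul a u _ hu => rw [smul_comm, hu, smul_zero]
    exact s.2 (hP (Module.mem_annihilator.mpr hskill))
  have hNlt : N < ⊤ := lt_top_iff_ne_top.mpr hNne
  have : Nontrivial (M ⧸ N) := Submodule.Quotient.nontrivial_iff.mpr hNlt.ne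
  obtain ⟨q, hq⟩ := associatedPrimes.nonempty R (M ⧸ N)
  obtain ⟨hqp, mb, hmb⟩ := isAssociatedPrime_iff.mp hq
  obtain ⟨m, rfl⟩ := Submodule.Quotient.mk_surjective N mb
  have hmbne : (Submodule.Quotient.mk m : M ⧸ N) ≠ 0 := by
    intro h
    apply hqp.ne_top
    rw [hmb, h, eq_top_iff]; intro a _; rw [Submodule.mem_colon_singleton, smul_zero]
    exact Submodule.zero_mem _
  have hmemq : ∀ a : R, a ∈ q → a • m ∈ N := by
    intro a ha
    rw [hmb, Submodule.mem_colon_singleton, Submodule.mem_bot, ← Submodule.Quotient.mk_smul,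
      Submodule.Quotient.mk_eq_zero] at ha
    exact ha
  have hannm : ∀ c : R, c • m = 0 → c ∈ q := by
    intro c hc
    rw [hmb, Submodule.mem_colon_singleton, Submodule.mem_bot, ← Submodule.Quotient.mk_smul, hc,
      Submodule.Quotient.mk_zero]
  have hqP : q ≤ P := by
    intro a ha
    by_contra haP
    obtain ⟨sa, hsa⟩ := (Submodule.mem_torsion'_iff (R := R) (M := M) P.primeCompl _).mp (hmemq a ha)
    have hz : ((sa : R) * a) • m = 0 := by rw [mul_smul]; exact hsa
    have hmN : m ∈ N := (Submodule.mem_torsion'_iff (R := R) (M := M) P.primeCompl m).mpr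
      ⟨⟨(sa : R) * a, Submonoid.mul_mem _ sa.2 haP⟩, hz⟩
    exact hmbne ((Submodule.Quotient.mk_eq_zero N).mpr hmN)
  -- q is an associated prime of M itself
  obtain ⟨tq, htq⟩ := IsNoetherian.noetherian q
  have hsel : ∀ a : R, ∃ s : P.primeCompl, a ∈ q → (s : R) • (a • m) = 0 := by
    intro a
    by_cases ha : a ∈ q
    · obtain ⟨s, hs⟩ := (Submodule.mem_torsion'_iff (R := R) (M := M) P.primeCompl _).mp (hmemq a ha)
      exact ⟨s, fun _ => hs⟩
    · exact ⟨1, fun h => absurd h ha⟩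
  choose g hg using hsel
  set s0 : P.primeCompl := ∏ a ∈ tq, g a with hs0
  have hcoe0 : (s0 : R) = ∏ a ∈ tq, (g a : R) := by simp [hs0]
  set y : M := (s0 : R) • m with hy
  have hq1 : q ≤ (Submodule.span R {y}).annihilator := by
    rw [← htq]
    rw [Submodule.span_le]
    intro a ha
    rw [SetLike.mem_coe, Submodule.mem_annihilator_span_singleton]
    have haq : a ∈ q := htq ▸ Submodule.subset_span ha
    have hprod : (∏ b ∈ tq.erase a, (g b : R)) * (g a : R) = ∏ b ∈ tq, (g b : R) :=
      Finset.prod_erase_mul tq _ ha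
    rw [hy, smul_comm, hcoe0, ← hprod, mul_smul, hg a haq, smul_zero]
  have hq2 : (Submodule.span R {y}).annihilator ≤ q := by
    intro b hb
    rw [Submodule.mem_annihilator_span_singleton, hy, smul_smul] at hb
    have : b * (s0 : R) ∈ q := hannm _ hb
    rcases hqp.mem_or_mem this with h | h
    · exact h
    · exact absurd (hqP h) s0.2
  have hcol : (Submodule.span R {y}).annihilator = (⊥ : Submodule R M).colon {y} := by
    ext a; rw [Submodule.mem_colon_singleton, Submodule.mem_bot,
      Submodule.mem_annihilator_span_singleton]
  exact ⟨q, isAssociatedPrime_iff.mpr ⟨hqp, y, by rw [← hcol]; exact le_antisymm hq1 hq2⟩, hqP⟩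

/-- Let `R` be a Noetherian local ring, equidimensional of dimension `d`, and let `M` be
a nonzero finitely generated `R`-module of depth `≥ d` (i.e. admitting a regular
`M`-sequence of length `d` inside the maximal ideal).  Then every associated prime of
`M` is a minimal prime of `R`; in particular the support of `M` is a union of
irreducible components of `Spec R`. -/
theorem stmt12 {R : Type*} [CommRing R] [IsNoetherianRing R] [IsLocalRing R]
    (d : ℕ) (hequi : ∀ p ∈ minimalPrimes R, ringKrullDim (R ⧸ p) = (d : WithBot (WithTop ℕ)))
    (M : Type*) [AddCommGroup M] [Module R M] [Module.Finite R M] [Nontrivial M]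
    (hdepth : ∃ rs : List R, rs.length = d ∧ (∀ r ∈ rs, r ∈ IsLocalRing.maximalIdeal R) ∧
      RingTheory.Sequence.IsRegular M rs) :
    associatedPrimes R M ⊆ minimalPrimes R ∧
    ∀ x ∈ Module.support R M, ∃ p ∈ minimalPrimes R,
      x ∈ PrimeSpectrum.zeroLocus (p : Set R) ∧
      PrimeSpectrum.zeroLocus (p : Set R) ⊆ Module.support R M := by
  obtain ⟨rs, hlen, hmemrs, hreg⟩ := hdepth
  -- replace `M` by a module in the same universe as `R`
  obtain ⟨n, f, hf⟩ := Module.Finite.exists_fin' R M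
  let e : ((Fin n → R) ⧸ LinearMap.ker f) ≃ₗ[R] M := f.quotKerEquivOfSurjective hf
  set M' := (Fin n → R) ⧸ LinearMap.ker f with hM'
  have hAss : associatedPrimes R M = associatedPrimes R M' :=
    LinearEquiv.AssociatedPrimes.eq e.symm
  have hreg' : RingTheory.Sequence.IsRegular M' rs := (e.isRegular_congr rs).mpr hreg
  have hsub : associatedPrimes R M ⊆ minimalPrimes R := by
    intro p hp
    have hp' : p ∈ associatedPrimes R M' := hAss ▸ hp
    obtain ⟨c, hclen, hchead⟩ := aux_chain d M' rs hlen hmemrs hreg' p hp'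
    haveI := hp.isPrime
    obtain ⟨q0, hq0, hq0le⟩ := Ideal.exists_minimalPrimes_le (bot_le : (⊥ : Ideal R) ≤ p)
    have hq0min : q0 ∈ minimalPrimes R := hq0
    have hq0prime : q0.IsPrime := hq0.1.1
    rcases eq_or_lt_of_le hq0le with rfl | hlt
    · exact hq0min
    · exfalso
      have hltPS : (⟨q0, hq0prime⟩ : PrimeSpectrum R) < c.head := by
        have : (⟨q0, hq0prime⟩ : PrimeSpectrum R).asIdeal < c.head.asIdeal := by
          rw [hchead]; exact hlt
        exact this
      have hdim := dim_ge_of_chain (c.cons ⟨q0, hq0prime⟩ hltPS)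
      have hlen2 : (c.cons ⟨q0, hq0prime⟩ hltPS).length = d + 1 := by
        simp [RelSeries.cons_length, hclen]
      rw [show (c.cons ⟨q0, hq0prime⟩ hltPS).head = ⟨q0, hq0prime⟩ from RelSeries.head_cons _ _ _,
        hlen2, hequi q0 hq0min] at hdim
      have : (d + 1 : ℕ) ≤ d := by exact_mod_cast hdim
      omega
  refine ⟨hsub, ?_⟩
  intro x hx
  rw [Module.support_eq_zeroLocus] at hx
  have hann : Module.annihilator R M ≤ x.asIdeal := by
    rwa [PrimeSpectrum.mem_zeroLocus, SetLike.coe_subset_coe] at hx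
  haveI : x.asIdeal.IsPrime := x.2
  obtain ⟨q, hqass, hqle⟩ := exists_assoc_le M x.asIdeal hann
  have hannq : Module.annihilator R M ≤ q := by
    obtain ⟨hqprime, y, hy⟩ := isAssociatedPrime_iff.mp hqass
    intro a ha
    rw [hy, Submodule.mem_colon_singleton, Submodule.mem_bot]
    exact Module.mem_annihilator.mp ha y
  refine ⟨q, hsub hqass, ?_, ?_⟩
  · rw [PrimeSpectrum.mem_zeroLocus, SetLike.coe_subset_coe]
    exact hqle
  · rw [Module.support_eq_zeroLocus]
    exact PrimeSpectrum.zeroLocus_anti_mono (by exact_mod_cast hannq)
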